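/- arXiv:2107.13099 — 6 statements merged into one kernel-verified Lean document; each statement's English description precedes it below -/
import Mathlib

section
/- Let G be a directed graph with sink V_0 as above. If there exists a minimal blocking set S ∈ β(V_i) with V_j ∉ S such that S does not block V_j to V_0, then there is no edge from V_i to V_j in G. -/
namespace GRN

variable {V : Type*}

/-- `p` is a vertex-simple directed path from `i` to `j` in the directed graph `E`. -/
def IsPath (E : V → V → Prop) (i j : V) (p : List V) : Prop :=
  p.head? = some i ∧ p.getLast? = some j ∧ p.Chain' E ∧ p.Nodup

/-- `S` blocks `i` to `j`: every vertex-simple directed path from `i` to `j` meets `S`. -/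
def Blocks (E : V → V → Prop) (S : Set V) (i j : V) : Prop :=
  ∀ p : List V, IsPath E i j p → ∃ v ∈ p, v ∈ S

/-- `S` is a minimal blocking set of `i` to `v0`. -/
def IsMinBlock (E : V → V → Prop) (v0 i : V) (S : Set V) : Prop :=
  S ⊆ ({v0, i} : Set V)ᶜ ∧ Blocks E S i v0 ∧ ∀ T : Set V, T ⊂ S → ¬ Blocks E T i v0

/-- `v0` has no outgoing edges. -/
def Sink (E : V → V → Prop) (v0 : V) : Prop := ∀ w, ¬ E v0 w

/-- every other vertex has a directed path to `v0`. -/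
def ReachAll (E : V → V → Prop) (v0 : V) : Prop :=
  ∀ i, i ≠ v0 → Relation.TransGen E i v0

end GRN

open GRN in
/-- If some minimal blocking set of `i` to `v0` omits `j` and fails to block `j` to `v0`,
then there is no edge `i → j`. -/
theorem stmt_2 {V : Type*} [Fintype V] (E : V → V → Prop) (v0 : V)
    (hsink : Sink E v0) (hreach : ReachAll E v0)
    (i j : V) (hij : i ≠ j) (hiv : i ≠ v0) (hjv : j ≠ v0)
    (S : Set V) (hS : IsMinBlock E v0 i S) (hjS : j ∉ S)
    (hnb : ¬ Blocks E S j v0) :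
    ¬ E i j := by
  intro hE
  rw [Blocks] at hnb
  push_neg at hnb
  obtain ⟨p, hp, hpS⟩ := hnb
  obtain ⟨hSc, hSb, _⟩ := hS
  by_cases hi : i ∈ p
  · obtain ⟨a, b, rfl⟩ := List.append_of_mem hi
    have hpath : IsPath E i v0 (i :: b) := by
      obtain ⟨h1, h2, h3, h4⟩ := hp
      refine ⟨rfl, ?_, ?_, ?_⟩
      · rw [List.getLast?_append] at h2
        rcases hlast : (i :: b).getLast? with _ | x
        · simp [List.getLast?_eq_none_iff] at hlast
        · rw [hlast] at h2; simpa using h2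
      · exact ((List.isChain_append.1 h3).2.1)
      · exact h4.sublist (List.sublist_append_right a (i :: b))
    obtain ⟨v, hv, hvS⟩ := hSb _ hpath
    exact hpS v (by simp [List.mem_append, hv]) hvS
  · have hpath : IsPath E i v0 (i :: p) := by
      obtain ⟨h1, h2, h3, h4⟩ := hp
      cases p with
      | nil => simp at h1
      | cons x t =>
        simp only [List.head?_cons, Option.some.injEq] at h1
        subst h1
        exact ⟨rfl, by simpa using h2, List.isChain_cons_cons.2 ⟨hE, h3⟩, List.nodup_cons.2 ⟨hi, h4⟩⟩
    obtain ⟨v, hv, hvS⟩ := hSb _ hpath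
    rcases List.mem_cons.1 hv with rfl | hv
    · exact (hSc hvS) (by simp)
    · exact hpS v hv hvS
end

section
/- Let G be a directed graph with sink V_0 as above, and let V_i, V_j be distinct vertices other than V_0. Suppose that for every minimal blocking set S ∈ β(V_i) with V_j ∉ S, the set S blocks V_j to V_0 (i.e., the hypothesis excluding the edge fails), and suppose there exists some S ∈ β(V_i) with V_j ∈ S. Then there is an edge from V_i to V_j in G. -/
open GRN

/-- Every blocking set avoiding `{v0, i}` contains a minimal blocking subset. -/
theorem exists_minBlock {V : Type*} [Fintype V] (E : V → V → Prop) (v0 i : V)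
    (T : Set V) (hTsub : T ⊆ ({v0, i} : Set V)ᶜ) (hTb : Blocks E T i v0) :
    ∃ T' ⊆ T, IsMinBlock E v0 i T' := by
  have hwf : WellFounded ((· < ·) : Set V → Set V → Prop) := wellFounded_lt
  obtain ⟨T', ⟨hT'T, hT'b⟩, hmin⟩ :=
    hwf.has_min {U | U ⊆ T ∧ Blocks E U i v0} ⟨T, le_refl _, hTb⟩
  refine ⟨T', hT'T, hT'T.trans hTsub, hT'b, fun U hU hUb => ?_⟩
  exact hmin U ⟨(subset_of_ssubset hU).trans hT'T, hUb⟩ hU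

open GRN in
/-- If every minimal blocking set of `i` to `v0` omitting `j` blocks `j` to `v0`, and some
minimal blocking set of `i` to `v0` contains `j`, then there is an edge `i → j`. -/
theorem stmt_3 {V : Type*} [Fintype V] (E : V → V → Prop) (v0 : V)
    (hsink : Sink E v0) (hreach : ReachAll E v0)
    (i j : V) (hij : i ≠ j) (hiv : i ≠ v0) (hjv : j ≠ v0)
    (hall : ∀ S : Set V, IsMinBlock E v0 i S → j ∉ S → Blocks E S j v0)
    (hex : ∃ S : Set V, IsMinBlock E v0 i S ∧ j ∈ S) :
    E i j := by
  by_contra hEij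
  obtain ⟨S, ⟨hSsub, hSb, hSmin⟩, hjS⟩ := hex
  have hiS : i ∉ S := fun h => hSsub h (by simp)
  have hvS : v0 ∉ S := fun h => hSsub h (by simp)
  -- no direct edge i → v0
  have hEiv : ¬ E i v0 := by
    intro h
    obtain ⟨v, hv, hvS'⟩ := hSb [i, v0]
      ⟨rfl, rfl, List.isChain_cons_cons.2 ⟨h, List.isChain_singleton _⟩, by simp [hiv]⟩
    rcases List.mem_pair.mp hv with rfl | rfl
    · exact hiS hvS'
    · exact hvS hvS'
  -- S \ {j} does not block, giving a path p from i to v0 meeting S only at j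
  have hssub : S \ {j} ⊂ S := Set.sdiff_singleton_ssubset.mpr hjS
  obtain ⟨p, hp, hpavoid⟩ := by
    have := hSmin (S \ {j}) hssub
    simpa only [Blocks, not_forall, not_exists] using this
  have hmeet : ∀ v ∈ p, v ∈ S → v = j := by
    intro v hv hvS'
    by_contra hne
    exact hpavoid v ⟨hv, hvS', hne⟩
  obtain ⟨hph, hpl, hpc, hpn⟩ := hp
  -- p = i :: pt
  obtain ⟨pt, rfl⟩ : ∃ pt, p = i :: pt := by
    cases p with
    | nil => simp at hph
    | cons a t =>
      simp only [List.head?_cons, Option.some.injEq] at hph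
      exact ⟨t, by rw [hph]⟩
  -- j ∈ p
  have hjp : j ∈ i :: pt := by
    obtain ⟨v, hv, hvS'⟩ := hSb (i :: pt) ⟨hph, hpl, hpc, hpn⟩
    exact hmeet v hv hvS' ▸ hv
  have hjpt : j ∈ pt := by
    rcases List.mem_cons.mp hjp with h | h
    · exact absurd h (Ne.symm hij)
    · exact h
  -- split pt = p₁ ++ j :: p₂
  obtain ⟨p₁, p₂, rfl⟩ := List.append_of_mem hjpt
  -- the set T of out-neighbors of i (other than v0, i) together with S \ {j}
  set T : Set V := (S \ {j}) ∪ {w | E i w ∧ w ≠ v0 ∧ w ≠ i} with hT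
  have hjT : j ∉ T := by
    rintro (⟨_, h⟩ | ⟨h, _⟩)
    · exact h rfl
    · exact hEij h
  have hTsub : T ⊆ ({v0, i} : Set V)ᶜ := by
    rintro w (hw | ⟨h1, h2, h3⟩)
    · exact hSsub hw.1
    · simp [h2, h3]
  have hTb : Blocks E T i v0 := by
    rintro q ⟨hqh, hql, hqc, hqn⟩
    obtain ⟨qt, rfl⟩ : ∃ qt, q = i :: qt := by
      cases q with
      | nil => simp at hqh
      | cons a t => cases hqh; exact ⟨t, rfl⟩
    cases qt with
    | nil => simp at hql; exact absurd hql hiv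
    | cons w qt' =>
      have hEiw : E i w := (List.isChain_cons_cons.mp hqc).1
      have hwv : w ≠ v0 := fun h => hEiv (h ▸ hEiw)
      have hwi : w ≠ i := fun h => (List.nodup_cons.mp hqn).1 (by simp [h])
      exact ⟨w, by simp, Or.inr ⟨hEiw, hwv, hwi⟩⟩
  obtain ⟨T', hT'T, hT'min⟩ := exists_minBlock E v0 i T hTsub hTb
  have hjT' : j ∉ T' := fun h => hjT (hT'T h)
  have hT'bj : Blocks E T' j v0 := hall T' hT'min hjT'
  -- the suffix j :: p₂ is a path from j to v0
  have hsuff : (j :: p₂) <:+ (i :: (p₁ ++ j :: p₂)) := by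
    refine ⟨i :: p₁, by simp⟩
  have hql2 : (j :: p₂).getLast? = some v0 := by
    rw [show (i :: (p₁ ++ j :: p₂)) = (i :: p₁) ++ (j :: p₂) by simp] at hpl
    rw [List.getLast?_append] at hpl
    cases h : (j :: p₂).getLast? with
    | none => simp at h
    | some a => rw [h] at hpl; simpa using hpl
  have hpath2 : IsPath E j v0 (j :: p₂) :=
    ⟨rfl, hql2, hpc.suffix hsuff, hpn.sublist hsuff.sublist⟩
  obtain ⟨w, hwq, hwT'⟩ := hT'bj (j :: p₂) hpath2
  -- w is an out-neighbor of i, lying in p₂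
  have hwnotS : w ∉ S \ {j} := by
    intro hw
    rcases List.mem_cons.mp hwq with h | h
    · exact absurd (h ▸ hw).2 (by simp)
    · exact hpavoid w ⟨List.mem_cons.mpr (Or.inr (List.mem_append.mpr (Or.inr
        (List.mem_cons.mpr (Or.inr h))))), hw⟩
  have hwN : E i w ∧ w ≠ v0 ∧ w ≠ i := by
    rcases hT'T hwT' with hw | hw
    · exact absurd hw hwnotS
    · exact hw
  have hwj : w ≠ j := fun h => hjT' (h ▸ hwT')
  have hwp₂ : w ∈ p₂ := by
    rcases List.mem_cons.mp hwq with h | h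
    · exact absurd h hwj
    · exact h
  -- split p₂ = p₃ ++ w :: p₄ ; the path i :: w :: p₄ avoids S, contradiction
  obtain ⟨p₃, p₄, rfl⟩ := List.append_of_mem hwp₂
  have hsuff4 : (w :: p₄) <:+ (i :: (p₁ ++ j :: (p₃ ++ w :: p₄))) :=
    ⟨i :: p₁ ++ j :: p₃, by simp⟩
  have hl4 : (w :: p₄).getLast? = some v0 := by
    rw [show (i :: (p₁ ++ j :: (p₃ ++ w :: p₄)))
        = (i :: p₁ ++ j :: p₃) ++ (w :: p₄) by simp] at hpl
    rw [List.getLast?_append] at hpl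
    cases h : (w :: p₄).getLast? with
    | none => simp at h
    | some a => rw [h] at hpl; simpa using hpl
  have hc4 : (w :: p₄).Chain' E := hpc.suffix hsuff4
  have hn4 : (w :: p₄).Nodup := hpn.sublist hsuff4.sublist
  have hinot : i ∉ w :: p₄ := by
    intro hi4
    have := (List.nodup_cons.mp hpn).1
    exact this (by
      rcases List.mem_cons.mp hi4 with h | h
      · exact absurd h.symm hwN.2.2
      · exact List.mem_append.mpr (Or.inr (List.mem_cons.mpr (Or.inr
          (List.mem_append.mpr (Or.inr (List.mem_cons.mpr (Or.inr h))))))))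
  have hpathF : IsPath E i v0 (i :: w :: p₄) := by
    refine ⟨rfl, ?_, List.isChain_cons_cons.mpr ⟨hwN.1, hc4⟩, List.nodup_cons.mpr ⟨hinot, hn4⟩⟩
    simpa using hl4
  obtain ⟨v, hv, hvS'⟩ := hSb _ hpathF
  -- but v ∈ S must be j, while j is not on this path
  have hjnot : j ∉ w :: p₄ := by
    have hnodup_tail : (j :: (p₃ ++ w :: p₄)).Nodup :=
      hpn.sublist (List.IsSuffix.sublist ⟨i :: p₁, by simp⟩)
    intro hj4
    rcases List.mem_cons.mp hj4 with h | h
    · exact hwj (h.symm ▸ rfl)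
    · exact (List.nodup_cons.mp hnodup_tail).1 (List.mem_append.mpr (Or.inr
        (List.mem_cons.mpr (Or.inr h))))
  rcases List.mem_cons.mp hv with h | h
  · exact hiS (h ▸ hvS')
  · have hvp : v ∈ i :: (p₁ ++ j :: (p₃ ++ w :: p₄)) :=
      List.mem_cons.mpr (Or.inr (List.mem_append.mpr (Or.inr (List.mem_cons.mpr (Or.inr
        (List.mem_append.mpr (Or.inr h)))))))
    have := hmeet v hvp hvS'
    exact hjnot (this ▸ h)
end

section
/- Let G be a connected directed acyclic graph on n ≥ 2 vertices. Then G contains at least n−1 identifiable edges, where an edge V_i → V_j is identifiable if no vertex other than V_i, V_j is both a descendant of V_i and an ancestor of V_j. -/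
/-!
If `a → b` is not identifiable, some vertex `k` lies strictly between `a` and `b`, and the sets of
vertices strictly between `a` and `k` and between `k` and `b` both miss `k` (by acyclicity), so are
smaller. Induction on the size of these sets shows that every edge, indeed every directed path, is
replaced by a directed path of identifiable edges. Hence the identifiable edges alone connect the
graph, and a connected graph on `n` vertices has at least `n - 1` edges.
-/

open Relation SimpleGraph

section

variable {V : Type*}

def IsIdentifiableEdge (E : V → V → Prop) (a b : V) : Prop :=
  E a b ∧ ∀ k : V, k ≠ a → k ≠ b → ¬ (TransGen E a k ∧ TransGen E k b)

def strictlyBetween (E : V → V → Prop) (a b : V) : Set V :=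
  {k | TransGen E a k ∧ TransGen E k b}

variable {E : V → V → Prop}

lemma strictlyBetween_left_ssubset (hacyc : ∀ v : V, ¬ TransGen E v v) {a b k : V}
    (hk : k ∈ strictlyBetween E a b) : strictlyBetween E a k ⊂ strictlyBetween E a b := by
  refine (Set.ssubset_iff_of_subset fun m hm => ?_).2 ⟨k, hk, fun hk' => hacyc k hk'.2⟩
  exact ⟨hm.1, hm.2.trans hk.2⟩

lemma strictlyBetween_right_ssubset (hacyc : ∀ v : V, ¬ TransGen E v v) {a b k : V}
    (hk : k ∈ strictlyBetween E a b) : strictlyBetween E k b ⊂ strictlyBetween E a b := by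
  refine (Set.ssubset_iff_of_subset fun m hm => ?_).2 ⟨k, hk, fun hk' => hacyc k hk'.1⟩
  exact ⟨hk.1.trans hm.1, hm.2⟩

lemma isIdentifiableEdge_of_strictlyBetween_eq_empty {a b : V} (hab : TransGen E a b)
    (hempty : strictlyBetween E a b = ∅) : IsIdentifiableEdge E a b := by
  have hnot (k : V) : ¬ (TransGen E a k ∧ TransGen E k b) :=
    Set.eq_empty_iff_forall_notMem.1 hempty k
  obtain ⟨c, hac, hcb⟩ := TransGen.head'_iff.1 hab
  refine ⟨?_, fun k _ _ => hnot k⟩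
  rcases reflTransGen_iff_eq_or_transGen.1 hcb with rfl | hcb
  · exact hac
  · exact (hnot c ⟨.single hac, hcb⟩).elim

lemma transGen_isIdentifiableEdge_of_transGen [Finite V] (hacyc : ∀ v : V, ¬ TransGen E v v)
    {a b : V} (hab : TransGen E a b) :
    TransGen (IsIdentifiableEdge E) a b := by
  induction hn : (strictlyBetween E a b).ncard using Nat.strong_induction_on generalizing a b with
  | _ n ih =>
  obtain hempty | ⟨k, hk⟩ := (strictlyBetween E a b).eq_empty_or_nonempty
  · exact .single (isIdentifiableEdge_of_strictlyBetween_eq_empty hab hempty)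
  · have hlt {s : Set V} (hs : s ⊂ strictlyBetween E a b) : s.ncard < n :=
      hn ▸ Set.ncard_lt_ncard hs
    exact (ih _ (hlt (strictlyBetween_left_ssubset hacyc hk)) hk.1 rfl).trans
      (ih _ (hlt (strictlyBetween_right_ssubset hacyc hk)) hk.2 rfl)

namespace SimpleGraph

lemma Reachable.of_reflTransGen {G : SimpleGraph V} {r : V → V → Prop}
    (hr : ∀ x y, r x y → G.Reachable x y) {a b : V} (h : ReflTransGen r a b) :
    G.Reachable a b := by
  induction h with
  | refl => rfl
  | tail _ hxy ih => exact ih.trans (hr _ _ hxy)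

lemma reachable_fromRel_of_rel {r : V → V → Prop} {x y : V} (h : r x y) :
    (fromRel r).Reachable x y := by
  obtain rfl | hne := eq_or_ne x y
  · rfl
  · exact Adj.reachable ((fromRel_adj r x y).2 ⟨hne, .inl h⟩)

lemma card_edgeSet_fromRel_le [Finite V] (r : V → V → Prop) :
    Nat.card (fromRel r).edgeSet ≤ {p : V × V | r p.1 p.2}.ncard := by
  have hsub : (fromRel r).edgeSet ⊆ (fun p : V × V => s(p.1, p.2)) '' {p | r p.1 p.2} := by
    rintro ⟨x, y⟩ hxy
    rcases ((fromRel_adj r x y).1 hxy).2 with h | h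
    · exact ⟨(x, y), h, rfl⟩
    · exact ⟨(y, x), h, Sym2.eq_swap⟩
  rw [Nat.card_coe_set_eq]
  exact (Set.ncard_le_ncard hsub (Set.toFinite _)).trans (Set.ncard_image_le (Set.toFinite _))

end SimpleGraph

end

theorem stmt_8_general {V : Type*} [Fintype V] (E : V → V → Prop)
    (hacyc : ∀ v : V, ¬ Relation.TransGen E v v)
    (hconn : ∀ a b : V, Relation.ReflTransGen (fun x y => E x y ∨ E y x) a b) :
    Fintype.card V - 1 ≤
      {p : V × V | E p.1 p.2 ∧ ∀ k : V, k ≠ p.1 → k ≠ p.2 →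
        ¬ (Relation.TransGen E p.1 k ∧ Relation.TransGen E k p.2)}.ncard := by
  rcases isEmpty_or_nonempty V with hV | hV
  · simp
  set G := fromRel (IsIdentifiableEdge E)
  have hreach (x y : V) (hxy : E x y) : G.Reachable x y :=
    .of_reflTransGen (fun _ _ => reachable_fromRel_of_rel)
      (transGen_isIdentifiableEdge_of_transGen hacyc (.single hxy)).to_reflTransGen
  have hG : G.Connected :=
    .mk fun a b => .of_reflTransGen
      (fun x y hxy => hxy.elim (hreach x y) fun hyx => (hreach y x hyx).symm) (hconn a b)
  have hcard := hG.card_vert_le_card_edgeSet_add_one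
  have hedges := card_edgeSet_fromRel_le (IsIdentifiableEdge E)
  rw [Nat.card_eq_fintype_card] at hcard
  exact Nat.sub_le_of_le_add (hcard.trans (Nat.add_le_add_right hedges 1))

/-- A connected DAG on `n ≥ 2` vertices has at least `n - 1` identifiable edges, where an edge
`i → j` is identifiable if no other vertex is both a descendant of `i` and an ancestor of `j`. -/
theorem stmt_8 {V : Type*} [Fintype V] (E : V → V → Prop)
    (hacyc : ∀ v : V, ¬ Relation.TransGen E v v)
    (hconn : ∀ a b : V, Relation.ReflTransGen (fun x y => E x y ∨ E y x) a b)
    (hn : 2 ≤ Fintype.card V) :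
    Fintype.card V - 1 ≤
      {p : V × V | E p.1 p.2 ∧ ∀ k : V, k ≠ p.1 → k ≠ p.2 →
        ¬ (Relation.TransGen E p.1 k ∧ Relation.TransGen E k p.2)}.ncard :=
  stmt_8_general E hacyc hconn
end

section
/- Under the stationary birth-death recursion (b(n−1)+k)P_{n−1} = cnP_n with k > 0, 0 ≤ b < c, the ratio Var(X)/E[X] equals c/(c−b); hence Var(X) = E[X] if and only if b = 0, and Var(X) > E[X] if and only if b > 0 (autocatalysis criterion). -/
/-- Autocatalysis criterion: under the stationary birth-death recursion, `Var(X)/E[X] = c/(c-b)`;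
hence `Var(X) = E[X] ↔ b = 0` and `Var(X) > E[X] ↔ b > 0`. -/
theorem stmt_12 (b c k : ℝ) (hk : 0 < k) (hb : 0 ≤ b) (hbc : b < c)
    (P : ℕ → ℝ) (hP0 : ∀ n, 0 ≤ P n) (hPsum : ∑' n : ℕ, P n = 1)
    (hrec : ∀ n : ℕ, 1 ≤ n → (b * ((n : ℝ) - 1) + k) * P (n - 1) = c * (n : ℝ) * P n)
    (h1 : Summable (fun n : ℕ => (n : ℝ) * P n))
    (h2 : Summable (fun n : ℕ => (n : ℝ) ^ 2 * P n)) :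
    ((∑' n : ℕ, (n : ℝ) ^ 2 * P n) - (∑' n : ℕ, (n : ℝ) * P n) ^ 2) /
        (∑' n : ℕ, (n : ℝ) * P n) = c / (c - b) ∧
    ((∑' n : ℕ, (n : ℝ) ^ 2 * P n) - (∑' n : ℕ, (n : ℝ) * P n) ^ 2
        = ∑' n : ℕ, (n : ℝ) * P n ↔ b = 0) ∧
    ((∑' n : ℕ, (n : ℝ) ^ 2 * P n) - (∑' n : ℕ, (n : ℝ) * P n) ^ 2
        > ∑' n : ℕ, (n : ℝ) * P n ↔ 0 < b) := by
  have hP : Summable P := by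
    by_contra h
    rw [tsum_eq_zero_of_not_summable h] at hPsum
    norm_num at hPsum
  set m1 := ∑' n : ℕ, (n : ℝ) * P n with hm1def
  set m2 := ∑' n : ℕ, (n : ℝ) ^ 2 * P n with hm2def
  have hcb : 0 < c - b := by linarith
  have hcb' : c - b ≠ 0 := ne_of_gt hcb
  have key : ∀ n : ℕ, c * (((n : ℝ) + 1) * P (n + 1)) = (b * (n : ℝ) + k) * P n := by
    intro n
    have h := hrec (n + 1) (by omega)
    simp only [Nat.add_sub_cancel] at h
    push_cast at h
    linear_combination -h
  -- first moment equation
  have e1 : c * m1 = b * m1 + k := by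
    have hsum : Summable (fun n : ℕ => c * ((n : ℝ) * P n)) := h1.mul_left c
    calc c * m1 = ∑' n : ℕ, c * ((n : ℝ) * P n) := (tsum_mul_left).symm
      _ = c * ((0:ℝ) * P 0) + ∑' n : ℕ, c * (((n:ℕ)+1 : ℝ) * P (n + 1)) := by
          rw [Summable.tsum_eq_zero_add hsum]; push_cast; ring_nf
      _ = ∑' n : ℕ, (b * (n : ℝ) + k) * P n := by
          simp only [Nat.cast_zero, zero_mul, mul_zero, zero_add]
          exact tsum_congr fun n => key n
      _ = ∑' n : ℕ, (b * ((n : ℝ) * P n) + k * P n) := tsum_congr fun n => by ring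
      _ = b * m1 + k := by
          rw [Summable.tsum_add (h1.mul_left b) (hP.mul_left k), tsum_mul_left, tsum_mul_left,
            hPsum, mul_one]
  -- second moment equation
  have key2 : ∀ n : ℕ, c * (((n : ℝ) + 1) ^ 2 * P (n + 1))
      = b * ((n : ℝ) ^ 2 * P n) + ((b + k) * ((n : ℝ) * P n) + k * P n) := by
    intro n
    linear_combination ((n : ℝ) + 1) * key n
  have e2 : c * m2 = b * m2 + (b + k) * m1 + k := by
    have hsum : Summable (fun n : ℕ => c * ((n : ℝ) ^ 2 * P n)) := h2.mul_left c
    calc c * m2 = ∑' n : ℕ, c * ((n : ℝ) ^ 2 * P n) := (tsum_mul_left).symm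
      _ = c * ((0:ℝ) ^ 2 * P 0) + ∑' n : ℕ, c * (((n:ℕ)+1 : ℝ) ^ 2 * P (n + 1)) := by
          rw [Summable.tsum_eq_zero_add hsum]; push_cast; ring_nf
      _ = ∑' n : ℕ, (b * ((n : ℝ) ^ 2 * P n) + ((b + k) * ((n : ℝ) * P n) + k * P n)) := by
          simp only [ne_eq, OfNat.ofNat_ne_zero, not_false_eq_true, zero_pow, zero_mul,
            mul_zero, zero_add]
          exact tsum_congr fun n => key2 n
      _ = b * m2 + (b + k) * m1 + k := by
          rw [Summable.tsum_add (h2.mul_left b) (((h1.mul_left (b + k))).add (hP.mul_left k)),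
            Summable.tsum_add (h1.mul_left (b + k)) (hP.mul_left k),
            tsum_mul_left, tsum_mul_left, tsum_mul_left, hPsum, mul_one]
          ring
  have hm1 : m1 = k / (c - b) := by
    field_simp
    linarith
  have hm1pos : 0 < m1 := by rw [hm1]; positivity
  have hvar : m2 - m1 ^ 2 = c * k / (c - b) ^ 2 := by
    rw [eq_div_iff (pow_ne_zero 2 hcb')]
    linear_combination (c - b) * e2 + (b + k) * e1 - ((c - b) * m1 + k) * e1
  have hdiff : m2 - m1 ^ 2 - m1 = k * b / (c - b) ^ 2 := by
    rw [hvar, hm1]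
    field_simp
    ring
  refine ⟨?_, ⟨?_, ?_⟩, ?_, ?_⟩
  · rw [hvar, hm1]
    field_simp
  · intro h
    have h0 : k * b / (c - b) ^ 2 = 0 := by linarith
    rw [div_eq_zero_iff] at h0
    rcases h0 with h0 | h0
    · rcases mul_eq_zero.mp h0 with hk0 | hb0
      · exact absurd hk0 (ne_of_gt hk)
      · exact hb0
    · exact absurd (pow_eq_zero_iff (by norm_num) |>.mp h0) hcb'
  · intro h
    subst h
    simp only [mul_zero, zero_div] at hdiff
    linarith
  · intro h
    have h0 : 0 < k * b / (c - b) ^ 2 := by linarith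
    by_contra hb0
    push_neg at hb0
    have hb1 : b = 0 := le_antisymm hb0 hb
    rw [hb1] at h0
    norm_num at h0
  · intro h
    have h0 : 0 < k * b / (c - b) ^ 2 := by positivity
    linarith
end

section
/- The bipartite-type directed graph G with vertices {V_0, V_1, ..., V_n} (n even), edges from each vertex of S_2 = {V_{n/2+1},...,V_n} to each vertex of S_1 = {V_1,...,V_{n/2}}, and edges from each vertex of S_1 to V_0, has exactly n²/4 + n/2 edges, and every edge of G is identifiable from path-blocking relations: for each edge V_i → V_j, either β(V_i) = ∅ (when j = 0), or there is a minimal blocking set of V_i to V_0 containing V_j and no minimal blocking set omitting V_j fails to block V_j to V_0. -/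
/-!
Every path into `V_0` ends with an edge out of `S_1`, so `S_1` blocks each vertex of `S_2`.
Conversely, a set avoiding `V_i` and `V_0` that blocks `V_i` must meet every path
`V_i → c → V_0` in its middle vertex `c`. For `V_i ∈ S_2` this makes `S_1` a minimal blocking
set that is contained in every other one, hence it contains each target `V_j` of an edge
`V_i → V_j` and no minimal blocking set omits `V_j`. For `V_i ∈ S_1` the edge `V_i → V_0` is a path
that no such set can meet, so `β(V_i) = ∅`.
-/

namespace GRN

section Blocking

variable {V : Type*} {E : V → V → Prop} {v0 i c : V} {p : List V} {S T : Set V}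

theorem isPath_singleton (i : V) : IsPath E i i [i] :=
  ⟨rfl, rfl, List.isChain_singleton _, List.nodup_singleton _⟩

theorem isPath_pair (h : E i v0) (hne : i ≠ v0) : IsPath E i v0 [i, v0] :=
  ⟨rfl, rfl, List.isChain_pair.mpr h, by simp [hne]⟩

theorem isPath_triple (hic : E i c) (hcv : E c v0) (hic' : i ≠ c) (hiv : i ≠ v0) (hcv' : c ≠ v0) :
    IsPath E i v0 [i, c, v0] :=
  ⟨rfl, rfl, List.isChain_cons_cons.mpr ⟨hic, List.isChain_pair.mpr hcv⟩,
    by simp [hic', hiv, hcv']⟩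

theorem IsPath.exists_mem_rel (hp : IsPath E i v0 p) (hne : i ≠ v0) : ∃ c ∈ p, E c v0 := by
  obtain ⟨hhead, hlast, hchain, -⟩ := hp
  obtain ⟨q, rfl⟩ := List.getLast?_eq_some_iff.mp hlast
  rcases q.eq_nil_or_concat with rfl | ⟨r, c, rfl⟩
  · exact absurd (Option.some_injective _ hhead).symm hne
  · rw [List.concat_eq_append] at hchain
    have hchain : List.IsChain E (r ++ [c] ++ [v0]) := hchain
    exact ⟨c, by simp, List.isChain_append.mp hchain |>.2.2 c (by simp) v0 rfl⟩

theorem blocks_of_forall_rel (hne : i ≠ v0) (hS : ∀ c, E c v0 → c ∈ S) : Blocks E S i v0 :=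
  fun _ hp => (hp.exists_mem_rel hne).imp fun c ⟨hc, hcv⟩ => ⟨hc, hS c hcv⟩

theorem ne_of_blocks (hT : T ⊆ ({v0, i} : Set V)ᶜ) (hB : Blocks E T i v0) : i ≠ v0 := by
  rintro rfl
  obtain ⟨v, hv, hvT⟩ := hB [i] (isPath_singleton i)
  exact hT hvT (by simp_all)

theorem not_blocks_of_rel (hT : T ⊆ ({v0, i} : Set V)ᶜ) (h : E i v0) : ¬ Blocks E T i v0 := by
  intro hB
  obtain ⟨v, hv, hvT⟩ := hB _ (isPath_pair h (ne_of_blocks hT hB))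
  exact hT hvT (by simp_all [or_comm])

theorem mem_of_blocks_of_rel_of_rel (hT : T ⊆ ({v0, i} : Set V)ᶜ) (hB : Blocks E T i v0)
    (hic : E i c) (hcv : E c v0) : c ∈ T := by
  have hiv := ne_of_blocks hT hB
  have hic' : i ≠ c := by rintro rfl; exact not_blocks_of_rel hT hcv hB
  have hcv' : c ≠ v0 := by rintro rfl; exact not_blocks_of_rel hT hic hB
  obtain ⟨v, hv, hvT⟩ := hB _ (isPath_triple hic hcv hic' hiv hcv')
  simp only [List.mem_cons, List.not_mem_nil, or_false] at hv
  rcases hv with rfl | rfl | rfl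
  · exact absurd hvT fun h => hT h (by simp)
  · exact hvT
  · exact absurd hvT fun h => hT h (by simp)

theorem not_isMinBlock_of_rel (h : E i v0) : ¬ IsMinBlock E v0 i S :=
  fun hS => not_blocks_of_rel hS.1 h hS.2.1

theorem IsMinBlock.mem_of_rel_of_rel (hS : IsMinBlock E v0 i S) (hic : E i c) (hcv : E c v0) :
    c ∈ S :=
  mem_of_blocks_of_rel_of_rel hS.1 hS.2.1 hic hcv

theorem isMinBlock_of_forall_rel (hS : S ⊆ ({v0, i} : Set V)ᶜ) (hB : Blocks E S i v0)
    (hmid : ∀ c ∈ S, E i c ∧ E c v0) : IsMinBlock E v0 i S := by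
  refine ⟨hS, hB, fun T hTS hT => ?_⟩
  obtain ⟨c, hcS, hcT⟩ := Set.exists_of_ssubset hTS
  exact hcT (mem_of_blocks_of_rel_of_rel (hTS.subset.trans hS) hT (hmid c hcS).1 (hmid c hcS).2)

end Blocking

section Bipartite

variable {m : ℕ}

/-- `S_1 = {V_1, ..., V_m}`. -/
def layer₁ (m : ℕ) : Finset (Fin (2 * m + 1)) :=
  (Finset.Ioc 0 m).attachFin fun _ h => by simp at h; omega

/-- `S_2 = {V_{m+1}, ..., V_{2m}}`. -/
def layer₂ (m : ℕ) : Finset (Fin (2 * m + 1)) :=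
  (Finset.Ioc m (2 * m)).attachFin fun _ h => by simp at h; omega

def bipartiteGraph (m : ℕ) (a b : Fin (2 * m + 1)) : Prop :=
  (m + 1 ≤ (a : ℕ) ∧ 1 ≤ (b : ℕ) ∧ (b : ℕ) ≤ m) ∨ (1 ≤ (a : ℕ) ∧ (a : ℕ) ≤ m ∧ b = 0)

theorem mem_layer₁ {a : Fin (2 * m + 1)} : a ∈ layer₁ m ↔ 1 ≤ (a : ℕ) ∧ (a : ℕ) ≤ m := by
  simp only [layer₁, Finset.mem_attachFin, Finset.mem_Ioc]; omega

theorem mem_layer₂ {a : Fin (2 * m + 1)} : a ∈ layer₂ m ↔ m + 1 ≤ (a : ℕ) := by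
  simp only [layer₂, Finset.mem_attachFin, Finset.mem_Ioc]; omega

theorem bipartiteGraph_iff {a b : Fin (2 * m + 1)} :
    bipartiteGraph m a b ↔ (a ∈ layer₂ m ∧ b ∈ layer₁ m) ∨ (a ∈ layer₁ m ∧ b = 0) := by
  simp only [bipartiteGraph, mem_layer₁, mem_layer₂, and_assoc]

theorem bipartiteGraph_zero_iff {c : Fin (2 * m + 1)} : bipartiteGraph m c 0 ↔ c ∈ layer₁ m := by
  simp [bipartiteGraph_iff, mem_layer₁]

theorem edgeSet_bipartiteGraph :
    {p : Fin (2 * m + 1) × Fin (2 * m + 1) | bipartiteGraph m p.1 p.2} =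
      ↑(layer₂ m ×ˢ layer₁ m ∪ layer₁ m ×ˢ {0}) := by
  ext ⟨a, b⟩
  simp [bipartiteGraph_iff, eq_comm]

theorem ncard_edgeSet_bipartiteGraph :
    {p : Fin (2 * m + 1) × Fin (2 * m + 1) | bipartiteGraph m p.1 p.2}.ncard = m ^ 2 + m := by
  have hdisj : Disjoint (layer₂ m ×ˢ layer₁ m) (layer₁ m ×ˢ {0}) :=
    Finset.disjoint_right.mpr fun ⟨a, b⟩ h h' => by
      simp only [Finset.mem_product, Finset.mem_singleton] at h h'
      rw [h.2] at h'
      simp [mem_layer₁] at h'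
  rw [edgeSet_bipartiteGraph, Set.ncard_coe_finset, Finset.card_union_of_disjoint hdisj,
    Finset.card_product, Finset.card_product, layer₁, layer₂, Finset.card_attachFin,
    Finset.card_attachFin, Nat.card_Ioc, Nat.card_Ioc, Finset.card_singleton,
    show 2 * m - m = m by omega, Nat.sub_zero]
  ring

theorem isMinBlock_layer₁ {a : Fin (2 * m + 1)} (ha : a ∈ layer₂ m) :
    IsMinBlock (bipartiteGraph m) 0 a ↑(layer₁ m) := by
  rw [mem_layer₂] at ha
  refine isMinBlock_of_forall_rel ?_ ?_ fun c hc => ?_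
  · intro c hc
    simp only [Finset.mem_coe, mem_layer₁] at hc
    rintro (rfl | rfl)
    · simp at hc
    · omega
  · exact blocks_of_forall_rel (by rintro rfl; simp at ha)
      fun c hc => bipartiteGraph_zero_iff.mp hc
  · exact ⟨bipartiteGraph_iff.mpr (.inl ⟨mem_layer₂.mpr ha, hc⟩), bipartiteGraph_zero_iff.mpr hc⟩

end Bipartite

end GRN

open GRN in
theorem stmt_16_general (m : ℕ) :
    letI E : Fin (2 * m + 1) → Fin (2 * m + 1) → Prop := fun a b =>
      (m + 1 ≤ (a : ℕ) ∧ 1 ≤ (b : ℕ) ∧ (b : ℕ) ≤ m) ∨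
      (1 ≤ (a : ℕ) ∧ (a : ℕ) ≤ m ∧ b = 0)
    {p : Fin (2 * m + 1) × Fin (2 * m + 1) | E p.1 p.2}.ncard = m ^ 2 + m ∧
    ∀ a b : Fin (2 * m + 1), E a b →
      (b = 0 → ¬ ∃ S : Set (Fin (2 * m + 1)), IsMinBlock E 0 a S) ∧
      (b ≠ 0 →
        (∃ S : Set (Fin (2 * m + 1)), IsMinBlock E 0 a S ∧ b ∈ S) ∧
        (∀ S : Set (Fin (2 * m + 1)), IsMinBlock E 0 a S → b ∉ S → Blocks E S b 0)) := by
  refine ⟨ncard_edgeSet_bipartiteGraph, fun a b (hab : bipartiteGraph m a b) => ⟨?_, fun hb => ?_⟩⟩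
  · rintro rfl ⟨S, hS⟩
    exact not_isMinBlock_of_rel hab hS
  · have hab' : a ∈ layer₂ m ∧ b ∈ layer₁ m := by
      simpa [hb] using (bipartiteGraph_iff.mp hab)
    have hb0 : bipartiteGraph m b 0 := bipartiteGraph_zero_iff.mpr hab'.2
    exact ⟨⟨_, isMinBlock_layer₁ hab'.1, hab'.2⟩,
      fun S hS hbS => absurd (hS.mem_of_rel_of_rel hab hb0) hbS⟩

open GRN in
/-- The bipartite-type graph on `{V_0, ..., V_n}` (`n = 2m`): each vertex of
`S_2 = {V_{m+1}, ..., V_{2m}}` points to each vertex of `S_1 = {V_1, ..., V_m}`, and each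
vertex of `S_1` points to `V_0`. It has exactly `n²/4 + n/2 = m² + m` edges, and every edge
is identifiable from the path-blocking relations. -/
theorem stmt_16 (m : ℕ) (hm : 1 ≤ m) :
    letI E : Fin (2 * m + 1) → Fin (2 * m + 1) → Prop := fun a b =>
      (m + 1 ≤ (a : ℕ) ∧ 1 ≤ (b : ℕ) ∧ (b : ℕ) ≤ m) ∨
      (1 ≤ (a : ℕ) ∧ (a : ℕ) ≤ m ∧ b = 0)
    {p : Fin (2 * m + 1) × Fin (2 * m + 1) | E p.1 p.2}.ncard = m ^ 2 + m ∧
    ∀ a b : Fin (2 * m + 1), E a b →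
      (b = 0 → ¬ ∃ S : Set (Fin (2 * m + 1)), IsMinBlock E 0 a S) ∧
      (b ≠ 0 →
        (∃ S : Set (Fin (2 * m + 1)), IsMinBlock E 0 a S ∧ b ∈ S) ∧
        (∀ S : Set (Fin (2 * m + 1)), IsMinBlock E 0 a S → b ∉ S → Blocks E S b 0)) :=
  stmt_16_general m
end

section
/- Let G be a directed graph with sink V_0 (no outgoing edges from V_0, every other vertex has a path to V_0) that does NOT contain the edge V_i → V_j, and suppose that for every minimal blocking set S of V_i to V_0, V_j ∉ S and S blocks V_j to V_0. Then adding the edge V_i → V_j to G does not change which sets block V_i to V_0: a set S ⊆ {V_1,...,V_n}\{V_i} blocks V_i to V_0 in G if and only if it blocks V_i to V_0 in G ∪ {V_i → V_j}. -/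
namespace GRN

variable {V : Type*}

def addEdge (E : V → V → Prop) (i j : V) : V → V → Prop :=
  fun a b => E a b ∨ (a = i ∧ b = j)

theorem IsPath.mono {E E' : V → V → Prop} (hE : E ≤ E') {i k : V} {p : List V}
    (hp : IsPath E i k p) : IsPath E' i k p :=
  ⟨hp.1, hp.2.1, hp.2.2.1.imp hE, hp.2.2.2⟩

theorem Blocks.of_le {E E' : V → V → Prop} (hE : E ≤ E') {S : Set V} {i k : V}
    (hS : Blocks E' S i k) : Blocks E S i k :=
  fun p hp => hS p (hp.mono hE)

theorem Blocks.mono {E : V → V → Prop} {S T : Set V} (hTS : T ⊆ S) {i k : V}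
    (hT : Blocks E T i k) : Blocks E S i k := fun p hp =>
  let ⟨v, hvp, hvT⟩ := hT p hp
  ⟨v, hvp, hTS hvT⟩

theorem exists_isMinBlock_subset [Finite V] {E : V → V → Prop} {v0 i : V} {S : Set V}
    (hS : S ⊆ ({v0, i} : Set V)ᶜ) (hb : Blocks E S i v0) :
    ∃ T ⊆ S, IsMinBlock E v0 i T := by
  obtain ⟨T, ⟨hTS, hTb⟩, hTmin⟩ :=
    WellFounded.has_min wellFounded_lt {T : Set V | T ⊆ S ∧ Blocks E T i v0} ⟨S, subset_rfl, hb⟩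
  exact ⟨T, hTS, hTS.trans hS, hTb, fun T' hT'T hT'b => hTmin T' ⟨hT'T.subset.trans hTS, hT'b⟩ hT'T⟩

theorem isChain_of_isChain_addEdge {E : V → V → Prop} {i j : V} {q : List V} (hiq : i ∉ q)
    (hq : q.IsChain (addEdge E i j)) : q.IsChain E :=
  hq.imp_of_mem_imp fun _ _ ha _ hab => hab.resolve_right fun h => hiq (h.1 ▸ ha)

theorem IsPath.of_addEdge {E : V → V → Prop} {i j k : V} {p : List V}
    (hp : IsPath (addEdge E i j) i k p) : IsPath E i k p ∨ ∃ r, p = i :: r ∧ IsPath E j k r := by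
  obtain ⟨hhead, hlast, hchain, hnodup⟩ := hp
  obtain ⟨q, rfl⟩ : ∃ q, p = i :: q := by cases p <;> simp_all
  have hiq : i ∉ q := (List.nodup_cons.mp hnodup).1
  have hq : q.IsChain E := isChain_of_isChain_addEdge hiq (List.isChain_cons.mp hchain).2
  cases q with
  | nil => exact Or.inl ⟨rfl, hlast, List.isChain_singleton i, hnodup⟩
  | cons w r =>
    rcases (List.isChain_cons_cons.mp hchain).1 with hiw | ⟨-, rfl⟩
    · exact Or.inl ⟨rfl, hlast, List.isChain_cons_cons.mpr ⟨hiw, hq⟩, hnodup⟩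
    · refine Or.inr ⟨_, rfl, rfl, ?_, hq, (List.nodup_cons.mp hnodup).2⟩
      rwa [List.getLast?_cons_cons] at hlast

theorem Blocks.addEdge {E : V → V → Prop} {S : Set V} {i j k : V}
    (hi : Blocks E S i k) (hj : Blocks E S j k) : Blocks (addEdge E i j) S i k := by
  intro p hp
  rcases hp.of_addEdge with hp | ⟨r, rfl, hr⟩
  · exact hi p hp
  · obtain ⟨v, hvr, hvS⟩ := hj r hr
    exact ⟨v, List.mem_cons_of_mem i hvr, hvS⟩

end GRN

open GRN in
theorem stmt_17_general {V : Type*} [Fintype V] (E : V → V → Prop) (v0 : V)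
    (i j : V)
    (hcond : ∀ S : Set V, IsMinBlock E v0 i S → j ∉ S ∧ Blocks E S j v0) :
    ∀ S : Set V, S ⊆ ({v0, i} : Set V)ᶜ →
      (Blocks E S i v0 ↔ Blocks (fun a b => E a b ∨ (a = i ∧ b = j)) S i v0) := by
  intro S hS
  refine ⟨fun hb => ?_, Blocks.of_le fun _ _ => Or.inl⟩
  obtain ⟨T, hTS, hT⟩ := exists_isMinBlock_subset hS hb
  exact hb.addEdge ((hcond T hT).2.mono hTS)

open GRN in
/-- If `G` does not contain the edge `i → j`, and every minimal blocking set of `i` to `v0`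
omits `j` and blocks `j` to `v0`, then adding the edge `i → j` does not change which sets
block `i` to `v0`. -/
theorem stmt_17 {V : Type*} [Fintype V] (E : V → V → Prop) (v0 : V)
    (hsink : Sink E v0) (hreach : ReachAll E v0)
    (i j : V) (hij : i ≠ j) (hiv : i ≠ v0) (hjv : j ≠ v0)
    (hnoedge : ¬ E i j)
    (hcond : ∀ S : Set V, IsMinBlock E v0 i S → j ∉ S ∧ Blocks E S j v0) :
    ∀ S : Set V, S ⊆ ({v0, i} : Set V)ᶜ →
      (Blocks E S i v0 ↔ Blocks (fun a b => E a b ∨ (a = i ∧ b = j)) S i v0) :=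
  stmt_17_general E v0 i j hcond
end
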